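/- arXiv:2004.01068 — 6 statements merged into one kernel-verified Lean document; each statement's English description precedes it below -/
import Mathlib

section
/- Let A be a unital associative ℂ-algebra whose dimension as a ℂ-vector space is at most countable, and let J be a primitive two-sided ideal of A. Then the center of the quotient algebra A/J consists of scalars: for every z ∈ A whose image in A/J commutes with the image of every element of A, there exists c ∈ ℂ such that z − c·1 ∈ J. -/
/-!
Dixmier's version of Schur's lemma. Let `M` be a simple `A`-module; by Schur, `D = End_A M` is a
division `ℂ`-algebra, and evaluation at a nonzero vector embeds `D` into `M`, itself a quotient
of `A`, so `dim_ℂ D` is countable. If some `φ ∈ D` were not algebraic over `ℂ`, the elements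
`(φ - c)⁻¹`, `c ∈ ℂ`, would be linearly independent (they live in a commutative subfield of `D`),
giving `D` uncountable dimension. Hence `D` is algebraic over the algebraically closed field `ℂ`,
so `D = ℂ`; applied to the action of `z`, which is `A`-linear, this says `z` acts as a scalar.
-/

universe u

open Cardinal

theorem Subalgebra.isField_centralizer_centralizer_singleton {K D : Type*} [Field K]
    [DivisionRing D] [Algebra K D] (x : D) :
    IsField (Subalgebra.centralizer K (Subalgebra.centralizer K {x} : Set D)) where
  exists_pair_ne := ⟨0, 1, zero_ne_one⟩
  mul_comm a b := Subtype.ext <| Set.centralizer_centralizer_comm_of_comm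
    (by rintro _ rfl _ rfl; rfl) _ a.2 _ b.2
  mul_inv_cancel {a} ha := ⟨⟨a⁻¹, Set.inv_mem_centralizer₀ a.2⟩,
    Subtype.ext (mul_inv_cancel₀ (by simpa [Subtype.ext_iff] using ha))⟩

theorem DivisionRing.isAlgebraic_of_rank_lt_card {K D : Type u} [Field K] [DivisionRing D]
    [Algebra K D] (h : Module.rank K D < #K) (x : D) : IsAlgebraic K x := by
  let F := Subalgebra.centralizer K (Subalgebra.centralizer K {x} : Set D)
  let _ : Field F := (Subalgebra.isField_centralizer_centralizer_singleton x).toField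
  have hx : x ∈ F := Set.subset_centralizer_centralizer rfl
  rw [← Subalgebra.isAlgebraic_iff_isAlgebraic_val (x := ⟨x, hx⟩)]
  by_contra htr
  have := (Transcendental.linearIndependent_sub_inv htr).cardinal_le_rank
  exact (this.trans (Submodule.rank_le (Subalgebra.toSubmodule F))).not_gt h

theorem DivisionRing.algebraMap_surjective_of_rank_lt_card {K D : Type u} [Field K]
    [IsAlgClosed K] [DivisionRing D] [Algebra K D] (h : Module.rank K D < #K) :
    Function.Surjective (algebraMap K D) :=
  have : Algebra.IsIntegral K D := ⟨fun x ↦ (isAlgebraic_of_rank_lt_card h x).isIntegral⟩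
  (IsAlgClosed.algebraMap_bijective_of_isIntegral).2

theorem rank_le_card_of_span_eq_top {R M : Type*} [Ring R] [StrongRankCondition R]
    [AddCommGroup M] [Module R M] {s : Set M} (hs : Submodule.span R s = ⊤) :
    Module.rank R M ≤ #s := by
  rw [← rank_top, ← hs]
  exact rank_span_le s

section

variable {K A M : Type u} [Field K] [Ring A] [Algebra K A] [AddCommGroup M] [Module A M]

def Module.End.smulOfCommutatorMemAnnihilator (z : A)
    (hz : ∀ a : A, z * a - a * z ∈ Module.annihilator A M) : Module.End A M where
  toFun m := z • m
  map_add' := smul_add z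
  map_smul' a m := by
    rw [RingHom.id_apply, ← mul_smul, ← mul_smul, ← sub_eq_zero, ← sub_smul]
    exact Module.mem_annihilator.1 (hz a) m

variable [Module K M] [IsScalarTower K A M] [IsSimpleModule A M]

variable (A) in
theorem IsSimpleModule.rank_le_rank : Module.rank K M ≤ Module.rank K A := by
  have := IsSimpleModule.nontrivial A M
  obtain ⟨m, hm⟩ := exists_ne (0 : M)
  exact ((LinearMap.toSpanSingleton A M m).restrictScalars K).rank_le_of_surjective
    (IsSimpleModule.toSpanSingleton_surjective A hm)

theorem IsSimpleModule.rank_end_le_rank : Module.rank K (Module.End A M) ≤ Module.rank K M := by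
  have := IsSimpleModule.nontrivial A M
  obtain ⟨m, hm⟩ := exists_ne (0 : M)
  refine (LinearMap.applyₗ' K m).rank_le_of_injective
    ((injective_iff_map_eq_zero _).2 fun f hf ↦ ?_)
  by_contra hf0
  exact hm ((LinearMap.bijective_of_ne_zero hf0).injective (hf.trans (map_zero f).symm))

theorem IsSimpleModule.exists_sub_algebraMap_mem_annihilator [IsAlgClosed K]
    (hA : Module.rank K A < #K) {z : A} (hz : ∀ a : A, z * a - a * z ∈ Module.annihilator A M) :
    ∃ c : K, z - algebraMap K A c ∈ Module.annihilator A M := by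
  classical
  obtain ⟨c, hc⟩ := DivisionRing.algebraMap_surjective_of_rank_lt_card
    ((rank_end_le_rank.trans (rank_le_rank A)).trans_lt hA)
    (Module.End.smulOfCommutatorMemAnnihilator z hz)
  refine ⟨c, Module.mem_annihilator.2 fun m ↦ ?_⟩
  have hcm : c • m = z • m := LinearMap.congr_fun hc m
  rw [sub_smul, algebraMap_smul, hcm, sub_self]

end

/-- **Schur-type lemma.**  Let `A` be a unital associative `ℂ`-algebra of at most countable
dimension as a `ℂ`-vector space and let `J` be a primitive two-sided ideal of `A`, i.e. the
annihilator `J = Ann M` of a simple left `A`-module `M`.  Then the center of `A ⧸ J` consists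
of scalars: every `z ∈ A` whose image in `A ⧸ J` commutes with the image of every element of
`A` is congruent to a scalar `c • 1` modulo `J`. -/
theorem center_quotient_primitive_eq_scalars_of_countable_dimension
    (A : Type) [Ring A] [Algebra ℂ A]
    (hcount : ∃ s : Set A, s.Countable ∧ Submodule.span ℂ s = ⊤)
    (M : Type) [AddCommGroup M] [Module A M] [IsSimpleModule A M]
    (z : A) (hz : ∀ a : A, z * a - a * z ∈ Module.annihilator A M) :
    ∃ c : ℂ, z - algebraMap ℂ A c ∈ Module.annihilator A M := by
  obtain ⟨s, hs, hspan⟩ := hcount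
  let _ : Module ℂ M := Module.compHom M (algebraMap ℂ A)
  have : IsScalarTower ℂ A M := .of_algebraMap_smul fun _ _ ↦ rfl
  refine IsSimpleModule.exists_sub_algebraMap_mem_annihilator ?_ hz
  calc Module.rank ℂ A ≤ #s := rank_le_card_of_span_eq_top hspan
    _ ≤ ℵ₀ := hs.le_aleph0
    _ < #ℂ := by rw [Cardinal.mk_complex]; exact aleph0_lt_continuum
end

section
/- Let A be a unital commutative ℂ-algebra whose dimension as a ℂ-vector space is at most countable, and let M be a maximal ideal of A. Then dim_ℂ(A/M) = 1; equivalently, the composition ℂ → A → A/M is a ℂ-algebra isomorphism, so every element of A is congruent modulo M to a unique scalar. -/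
/-!
A maximal quotient `K = A ⧸ M` is a field of countable dimension over `ℂ`. If some `x ∈ K` were
transcendental, the elements `(x - c)⁻¹`, `c ∈ ℂ`, would be linearly independent, giving
`𝔠 = #ℂ ≤ dim_ℂ K ≤ ℵ₀`. So `K` is algebraic over the algebraically closed field `ℂ`,
hence equal to it.
-/

universe u v

open Cardinal

theorem Algebra.IsAlgebraic.of_lift_rank_lt_lift_cardinalMk {F : Type u} {E : Type v}
    [Field F] [Field E] [Algebra F E] (h : lift.{u} (Module.rank F E) < lift.{v} #F) :
    Algebra.IsAlgebraic F E := by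
  refine ⟨fun x ↦ of_not_not fun hx ↦ h.not_ge ?_⟩
  exact (Transcendental.linearIndependent_sub_inv hx).cardinal_lift_le_rank

theorem IsAlgClosed.algebraMap_bijective_of_rank_lt_cardinalMk {k K : Type u} [Field k]
    [IsAlgClosed k] [Field K] [Algebra k K] (h : Module.rank k K < #k) :
    Function.Bijective (algebraMap k K) := by
  have : Algebra.IsAlgebraic k K :=
    .of_lift_rank_lt_lift_cardinalMk (by simpa only [lift_id] using h)
  exact IsAlgClosed.algebraMap_bijective_of_isIntegral

theorem rank_le_aleph0_of_span_eq_top {R M : Type*} [Ring R] [StrongRankCondition R]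
    [AddCommGroup M] [Module R M] {s : Set M} (hs : s.Countable)
    (hspan : Submodule.span R s = ⊤) : Module.rank R M ≤ ℵ₀ := by
  rw [← rank_top, ← hspan]
  exact (rank_span_le s).trans hs.le_aleph0

theorem Ideal.existsUnique_sub_algebraMap_mem {R A : Type*} [CommRing R] [CommRing A]
    [Algebra R A] {I : Ideal A} (h : Function.Bijective (algebraMap R (A ⧸ I))) (a : A) :
    ∃! c : R, a - algebraMap R A c ∈ I := by
  have hmem (c : R) :
      a - algebraMap R A c ∈ I ↔ algebraMap R (A ⧸ I) c = Ideal.Quotient.mk I a := by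
    rw [← Ideal.Quotient.mk_algebraMap, eq_comm, Ideal.Quotient.mk_eq_mk_iff_sub_mem]
  simpa only [hmem] using (Function.bijective_iff_existsUnique _).1 h (Ideal.Quotient.mk I a)

/-- Let `A` be a unital commutative `ℂ`-algebra of at most countable dimension as a `ℂ`-vector
space, and let `M` be a maximal ideal of `A`.  Then `dim_ℂ (A ⧸ M) = 1`; equivalently, the
composition `ℂ → A → A ⧸ M` is a `ℂ`-algebra isomorphism, so every element of `A` is congruent
modulo `M` to a unique scalar. -/
theorem algebraMap_quotient_maximal_bijective_of_countable_dimension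
    (A : Type) [CommRing A] [Algebra ℂ A]
    (hcount : ∃ s : Set A, s.Countable ∧ Submodule.span ℂ s = ⊤)
    (M : Ideal A) (hM : M.IsMaximal) :
    Function.Bijective (algebraMap ℂ (A ⧸ M)) ∧
      ∀ a : A, ∃! c : ℂ, a - algebraMap ℂ A c ∈ M := by
  obtain ⟨s, hs, hspan⟩ := hcount
  let := Ideal.Quotient.field M
  have hrank : Module.rank ℂ (A ⧸ M) < #ℂ :=
    calc Module.rank ℂ (A ⧸ M)
        ≤ Module.rank ℂ A :=
          (Ideal.Quotient.mkₐ ℂ M).toLinearMap.rank_le_of_surjective Ideal.Quotient.mk_surjective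
      _ ≤ ℵ₀ := rank_le_aleph0_of_span_eq_top hs hspan
      _ < #ℂ := mk_complex ▸ aleph0_lt_continuum
  have hbij := IsAlgClosed.algebraMap_bijective_of_rank_lt_cardinalMk hrank
  exact ⟨hbij, Ideal.existsUnique_sub_algebraMap_mem hbij⟩
end

section
/- Let (R_n)_{n≥1} be a sequence of nonzero finitely generated commutative unital ℂ-algebras which are integral domains, together with injective ℂ-algebra homomorphisms ι_n : R_n → R_{n+1} for all n ≥ 1. Then there exists a sequence of ℂ-algebra homomorphisms φ_n : R_n → ℂ satisfying φ_{n+1} ∘ ι_n = φ_n for all n ≥ 1. -/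
/-!
The `R n` form a directed system whose colimit `A` is a `ℂ`-algebra, nonzero as every `R n` is,
generated by countably many elements and hence of countable dimension; a compatible family of
points is a `ℂ`-point of `A`. The residue field of `A` at a maximal ideal again has countable
dimension over `ℂ`. It is therefore algebraic over `ℂ`, hence equal to `ℂ`: for a transcendental
`x` the uncountably many elements `(x - a)⁻¹`, `a ∈ ℂ`, would be linearly independent.
-/

open Cardinal

universe u

namespace AlgHom

variable {K : Type*} [CommSemiring K] {A : ℕ → Type*} [∀ n, Semiring (A n)]
  [∀ n, Algebra K (A n)] (f : ∀ n, A n →ₐ[K] A (n + 1))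

def natLERec (m n : ℕ) (h : m ≤ n) : A m →ₐ[K] A n :=
  Nat.leRecOn h (fun g => (f _).comp g) (AlgHom.id K _)

theorem coe_natLERec (m n : ℕ) (h : m ≤ n) :
    (natLERec f m n h : A m → A n) = Nat.leRecOn h (fun x => f _ x) := by
  induction n, h using Nat.le_induction with
  | base => ext x; simp [natLERec, Nat.leRecOn_self]
  | succ n hmn ih =>
    ext x
    rw [natLERec, Nat.leRecOn_succ hmn, ← natLERec, comp_apply, ih, Nat.leRecOn_succ hmn]

instance natLERec.directedSystem : DirectedSystem A fun i j h => natLERec f i j h where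
  map_self i x := by simp [coe_natLERec, Nat.leRecOn_self]
  map_map {k j i} hij hjk x := by simp [coe_natLERec, Nat.leRecOn_trans hij hjk]

theorem natLERec_succ (n : ℕ) : natLERec f n (n + 1) n.le_succ = f n := by
  ext x
  simp [coe_natLERec, Nat.leRecOn_succ']

end AlgHom

theorem DirectLimit.Algebra.of_succ_comp {K : Type*} [CommSemiring K] {A : ℕ → Type*}
    [∀ n, Semiring (A n)] [∀ n, Algebra K (A n)] (f : ∀ n, A n →ₐ[K] A (n + 1)) (n : ℕ) :
    (of A (AlgHom.natLERec f) (n + 1)).comp (f n) = of A (AlgHom.natLERec f) n := by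
  ext x
  simpa [AlgHom.natLERec_succ] using of_f (f := AlgHom.natLERec f) n.le_succ x

theorem Algebra.rank_le_aleph0_of_adjoin_eq_top {K A : Type u} [Field K] [CommRing A]
    [Algebra K A] {s : Set A} (hs : s.Countable) (h : adjoin K s = ⊤) :
    Module.rank K A ≤ ℵ₀ := by
  have hsurj : Function.Surjective (MvPolynomial.aeval (R := K) ((↑) : s → A)) := by
    rw [← AlgHom.range_eq_top, ← adjoin_range_eq_range_aeval, Subtype.range_coe, h]
  have : Countable s := hs.to_subtype
  calc Module.rank K A ≤ Module.rank K (MvPolynomial s K) :=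
        (MvPolynomial.aeval _).toLinearMap.rank_le_of_surjective hsurj
    _ = #(s →₀ ℕ) := MvPolynomial.rank_eq
    _ ≤ ℵ₀ := mk_le_aleph0

theorem DirectLimit.Algebra.rank_le_aleph0 {K ι : Type u} [Field K] [Preorder ι]
    [IsDirectedOrder ι] [Nonempty ι] [Countable ι] {G : ι → Type u} [∀ i, CommRing (G i)]
    [∀ i, Algebra K (G i)] [∀ i, Algebra.FiniteType K (G i)] (f : ∀ i j, i ≤ j → G i →ₐ[K] G j)
    [DirectedSystem G fun i j h => f i j h] :
    Module.rank K (DirectLimit G f) ≤ ℵ₀ := by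
  choose s hs using fun i => (Algebra.FiniteType.out : (⊤ : Subalgebra K (G i)).FG)
  refine Algebra.rank_le_aleph0_of_adjoin_eq_top (s := ⋃ i, of G f i '' s i)
    (Set.countable_iUnion fun i => (s i).countable_toSet.image _) (eq_top_iff.2 fun x _ => ?_)
  induction x using DirectLimit.induction with | _ i x
  have hx : of G f i x ∈ Algebra.adjoin K (of G f i '' s i) := by
    rw [← AlgHom.map_adjoin, hs i]
    exact ⟨x, trivial, rfl⟩
  exact Algebra.adjoin_mono (Set.subset_iUnion (fun i => of G f i '' s i) i) hx

theorem Algebra.IsAlgebraic.of_rank_lt_card {K L : Type u} [Field K] [Field L] [Algebra K L]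
    (h : Module.rank K L < #K) : Algebra.IsAlgebraic K L :=
  ⟨fun _ => by_contra fun hx =>
    h.not_ge (Transcendental.linearIndependent_sub_inv hx).cardinal_le_rank⟩

theorem IsAlgClosed.nonempty_algHom_of_rank_lt_card {K A : Type u} [Field K] [IsAlgClosed K]
    [CommRing A] [Nontrivial A] [Algebra K A] (h : Module.rank K A < #K) :
    Nonempty (A →ₐ[K] K) := by
  obtain ⟨m, hm⟩ := Ideal.exists_maximal A
  let := Ideal.Quotient.field m
  have hrank : Module.rank K (A ⧸ m) < #K :=
    ((Ideal.Quotient.mkₐ K m).toLinearMap.rank_le_of_surjective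
      (Ideal.Quotient.mkₐ_surjective K m)).trans_lt h
  have := Algebra.IsAlgebraic.of_rank_lt_card hrank
  let e := AlgEquiv.ofBijective (Algebra.ofId K (A ⧸ m)) algebraMap_bijective_of_isIntegral
  exact ⟨(e.symm : A ⧸ m →ₐ[K] K).comp (Ideal.Quotient.mkₐ K m)⟩

theorem exists_compatible_points_of_chain_of_domains_general
    (R : ℕ → Type) [∀ n, CommRing (R n)] [∀ n, Algebra ℂ (R n)]
    [∀ n, IsDomain (R n)] [∀ n, Algebra.FiniteType ℂ (R n)]
    (ι : ∀ n, R n →ₐ[ℂ] R (n + 1)) :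
    ∃ φ : ∀ n, R n →ₐ[ℂ] ℂ, ∀ n, (φ (n + 1)).comp (ι n) = φ n := by
  have hrank : Module.rank ℂ (DirectLimit R (AlgHom.natLERec ι)) < #ℂ :=
    (DirectLimit.Algebra.rank_le_aleph0 _).trans_lt (mk_complex ▸ aleph0_lt_continuum)
  obtain ⟨ψ⟩ := IsAlgClosed.nonempty_algHom_of_rank_lt_card hrank
  exact ⟨fun n => ψ.comp (DirectLimit.Algebra.of R _ n),
    fun n => by rw [AlgHom.comp_assoc, DirectLimit.Algebra.of_succ_comp]⟩

/-- **A pro-variety has a point.**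
Let `(R n)` be a sequence of nonzero finitely generated commutative unital `ℂ`-algebras which
are integral domains, together with injective `ℂ`-algebra homomorphisms `ι n : R n → R (n+1)`.
Then there exists a compatible sequence of `ℂ`-algebra homomorphisms `φ n : R n → ℂ`. -/
theorem exists_compatible_points_of_chain_of_domains
    (R : ℕ → Type) [∀ n, CommRing (R n)] [∀ n, Algebra ℂ (R n)]
    [∀ n, IsDomain (R n)] [∀ n, Algebra.FiniteType ℂ (R n)]
    (ι : ∀ n, R n →ₐ[ℂ] R (n + 1)) (hι : ∀ n, Function.Injective (ι n)) :
    ∃ φ : ∀ n, R n →ₐ[ℂ] ℂ, ∀ n, (φ (n + 1)).comp (ι n) = φ n :=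
  exists_compatible_points_of_chain_of_domains_general R ι
end

section
/- Let σ be a countable type and let (f_n)_{n ∈ ℕ} be a countable family of nonzero polynomials in the multivariate polynomial ring ℂ[X_s : s ∈ σ] over ℂ. Then there exists a point λ : σ → ℂ such that the evaluation of f_n at λ is nonzero for every n ∈ ℕ. -/
/-!
A nonzero polynomial cannot vanish on a nonempty open subset of `σ → ℂ`, since such a set
contains a box with infinite sides; so each `{x | f n x ≠ 0}` is open and dense. For countable `σ`
the space `σ → ℂ` is Polish, hence Baire, and the countable intersection of these sets is dense,
in particular nonempty.
-/

open Filter Topology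

namespace MvPolynomial

variable {R σ : Type*} [CommRing R] [IsDomain R] [TopologicalSpace R] [T1Space R]
  [∀ x : R, (𝓝[≠] x).NeBot]

theorem eq_zero_of_eventually_eval_eq_zero {p : MvPolynomial σ R} {x₀ : σ → R}
    (h : ∀ᶠ x in 𝓝 x₀, eval x p = 0) : p = 0 := by
  rw [nhds_pi] at h
  obtain ⟨I, -, t, ht, hsub⟩ := Filter.mem_pi.mp h
  refine funext_set t (fun i ↦ infinite_of_mem_nhds (x₀ i) (ht i)) fun x hx ↦ ?_
  simpa using hsub fun i _ ↦ hx i trivial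

theorem dense_setOf_eval_ne_zero {p : MvPolynomial σ R} (hp : p ≠ 0) :
    Dense {x : σ → R | eval x p ≠ 0} := by
  refine dense_iff_inter_open.mpr fun U hU ⟨x₀, hx₀⟩ ↦ ?_
  by_contra hU_vanish
  refine hp (eq_zero_of_eventually_eval_eq_zero (x₀ := x₀) ?_)
  filter_upwards [hU.mem_nhds hx₀] with x hx
  by_contra hx'
  exact hU_vanish ⟨x, hx, hx'⟩

end MvPolynomial

/-- **Irreducibility of the countable-Zariski topology on the dual space.**
Let `σ` be a countable type and let `(f_n)` be a countable family of nonzero polynomials in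
`ℂ[X_s : s ∈ σ]`.  Then there exists a point `λ : σ → ℂ` at which every `f_n` is nonzero. -/
theorem exists_point_nonvanishing_of_countable_family
    (σ : Type) [Countable σ] (f : ℕ → MvPolynomial σ ℂ) (hf : ∀ n, f n ≠ 0) :
    ∃ lam : σ → ℂ, ∀ n, MvPolynomial.eval lam (f n) ≠ 0 := by
  have hopen n : IsOpen {x : σ → ℂ | MvPolynomial.eval x (f n) ≠ 0} :=
    isOpen_ne.preimage (MvPolynomial.continuous_eval (f n))
  obtain ⟨lam, hlam⟩ :=
    (dense_iInter_of_isOpen hopen fun n ↦ MvPolynomial.dense_setOf_eval_ne_zero (hf n)).nonempty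
  exact ⟨lam, Set.mem_iInter.mp hlam⟩
end

section
/- Let Ω be a field, let F ⊆ Ω be an algebraically closed subfield, and let K ⊆ Ω be a subfield. Let f, g ∈ K[X] be coprime polynomials with g monic, and suppose there exists a finite subset S ⊆ F such that for every a ∈ F ∖ S one has g(a) ≠ 0 and f(a)/g(a) ∈ F (evaluations and the quotient taken in Ω). Then all coefficients of f and of g lie in the subfield F ∩ K. -/
/-! Pick `m + n` distinct points `aᵢ ∈ F ∖ S`, where `m = deg f + 1` and `n = deg g`, and put
`bᵢ = f(aᵢ) / g(aᵢ) ∈ F`. The conditions `p(aᵢ) = bᵢ q(aᵢ)` on a polynomial `p` of degree `< m`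
and a monic `q` of degree `n` form a square linear system with coefficients in `F`. Over `Ω` its
only solution is `(f, g)`: `p g - f q` has degree `< m + n` and vanishes at every `aᵢ`, so
`p g = f q`, and coprimality forces `q = g`. A square system over `F` with a unique solution over
`Ω` has an invertible matrix, so that solution already has its entries in `F`. -/

open Polynomial Matrix

theorem Matrix.exists_comp_eq_of_forall_mulVec_eq_iff {K L ι : Type*} [Field K] [CommRing L]
    [IsDomain L] [Fintype ι] [DecidableEq ι] (φ : K →+* L) {M : Matrix ι ι K} {v : ι → K}
    {x : ι → L} (h : ∀ y, M.map φ *ᵥ y = φ ∘ v ↔ y = x) : ∃ z, φ ∘ z = x := by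
  have hdet : (M.map φ).det ≠ 0 := by
    intro hzero
    obtain ⟨k, hk, hMk⟩ := exists_mulVec_eq_zero_iff.mpr hzero
    have hxk : x + k = x := (h _).mp (by rw [mulVec_add, hMk, add_zero, (h x).mpr rfl])
    exact hk (by simpa using hxk)
  have hM : IsUnit M.det := by
    refine isUnit_iff_ne_zero.mpr fun h0 => hdet ?_
    rw [← RingHom.mapMatrix_apply, ← RingHom.map_det, h0, map_zero]
  refine ⟨M⁻¹ *ᵥ v, (h _).mp (funext fun i => ?_)⟩
  rw [← RingHom.map_mulVec, mulVec_mulVec, mul_nonsing_inv _ hM, one_mulVec, Function.comp_apply]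

theorem Set.Finite.exists_injective_forall_notMem {α ι : Type*} [Infinite α] [Finite ι]
    {T : Set α} (hT : T.Finite) : ∃ a : ι → α, Function.Injective a ∧ ∀ i, a i ∉ T := by
  obtain ⟨n, ⟨e⟩⟩ := Finite.exists_equiv_fin ι
  let a : ι ↪ (Tᶜ : Set α) :=
    e.toEmbedding.trans (Fin.valEmbedding.trans hT.infinite_compl.natEmbedding)
  exact ⟨fun i => a i, Subtype.val_injective.comp a.injective, fun i => (a i).2⟩

namespace Polynomial

theorem coeff_mem_of_forall_lt_natDegree {R S : Type*} [Semiring R] [SetLike S R]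
    [ZeroMemClass S R] (s : S) {p : R[X]} {m : ℕ} (hp : p.natDegree < m)
    (h : ∀ i < m, p.coeff i ∈ s) (i : ℕ) : p.coeff i ∈ s := by
  rcases lt_or_ge i m with hi | hi
  · exact h i hi
  · rw [coeff_eq_zero_of_natDegree_lt (hp.trans_le hi)]
    exact zero_mem s

theorem eval_ofFn {R : Type*} [CommSemiring R] [DecidableEq R] {n : ℕ} (v : Fin n → R) (x : R) :
    (ofFn n v).eval x = ∑ i, v i * x ^ (i : ℕ) := by
  simp [ofFn_eq_sum_monomial, eval_finsetSum]

theorem Monic.X_pow_add_ofFn_toFn {R : Type*} [Semiring R] [DecidableEq R] {g : R[X]}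
    (hg : g.Monic) {n : ℕ} (hgn : g.natDegree = n) : X ^ n + ofFn n (toFn n g) = g := by
  subst hgn
  ext i
  rw [coeff_add, coeff_X_pow]
  rcases lt_trichotomy i g.natDegree with hi | rfl | hi
  · simp [hi, hi.ne, toFn]
  · simp [hg.coeff_natDegree]
  · simp [hi.ne', hi.le, coeff_eq_zero_of_natDegree_lt hi]

theorem eq_of_eval_mul_eval_eq {R ι : Type*} [CommRing R] [IsDomain R] [Fintype ι] {m : ℕ}
    {p q f g : R[X]} (hfg : IsCoprime f g) (hg : g.Monic) (hq : q.Monic)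
    (hqg : q.natDegree = g.natDegree) (hp : p.natDegree < m) (hf : f.natDegree < m)
    {a : ι → R} (ha : Function.Injective a) (hcard : m + g.natDegree ≤ Fintype.card ι)
    (heval : ∀ i, p.eval (a i) * g.eval (a i) = f.eval (a i) * q.eval (a i)) :
    p = f ∧ q = g := by
  have hdeg : (p * g - f * q).natDegree < Fintype.card ι := by
    refine (natDegree_sub_le _ _).trans_lt (max_lt ?_ ?_)
    · exact natDegree_mul_le.trans_lt (by omega)
    · exact natDegree_mul_le.trans_lt (by omega)
  have hpg : p * g = f * q := sub_eq_zero.mp <|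
    eq_zero_of_natDegree_lt_card_of_eval_eq_zero _ ha (by simp [heval]) hdeg
  have hgq : g ∣ q := hfg.symm.dvd_of_dvd_mul_left ⟨p, by rw [← hpg, mul_comm]⟩
  have hqg : q = g := eq_of_monic_of_dvd_of_natDegree_le hg hq hgq hqg.le
  subst hqg
  exact ⟨mul_right_cancel₀ hg.ne_zero hpg, rfl⟩

section RationalInterpolation

variable {R ι : Type*} [CommRing R]

/-- Row `i` is the equation `p(aᵢ) = bᵢ q(aᵢ)` in the coefficients of `p` (of degree `< m`) and
of the lower part of `q = Xⁿ + …`, with its term `bᵢ aᵢⁿ` moved to the right-hand side. -/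
def rationalInterpolationMatrix (m n : ℕ) (a b : ι → R) : Matrix ι (Fin m ⊕ Fin n) R :=
  Matrix.of fun i => Sum.elim (fun j => a i ^ (j : ℕ)) (fun k => -(b i * a i ^ (k : ℕ)))

theorem map_rationalInterpolationMatrix {S : Type*} [CommRing S] (φ : R →+* S) (m n : ℕ)
    (a b : ι → R) :
    (rationalInterpolationMatrix m n a b).map φ =
      rationalInterpolationMatrix m n (φ ∘ a) (φ ∘ b) := by
  ext i (j | k) <;> simp [rationalInterpolationMatrix]

variable [DecidableEq R] {m n : ℕ} {a b : ι → R}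

theorem rationalInterpolationMatrix_mulVec_eq_iff (z : Fin m ⊕ Fin n → R) :
    rationalInterpolationMatrix m n a b *ᵥ z = (fun i => b i * a i ^ n) ↔
      ∀ i, (ofFn m (z ∘ Sum.inl)).eval (a i) =
        b i * (X ^ n + ofFn n (z ∘ Sum.inr)).eval (a i) := by
  have hrow : ∀ i, (rationalInterpolationMatrix m n a b *ᵥ z) i =
      (ofFn m (z ∘ Sum.inl)).eval (a i) - b i * (ofFn n (z ∘ Sum.inr)).eval (a i) := by
    intro i
    simp only [rationalInterpolationMatrix, mulVec, dotProduct, Fintype.sum_sum_type, of_apply,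
      Sum.elim_inl, Sum.elim_inr, eval_ofFn, Function.comp_apply, Finset.mul_sum,
      ← Finset.sum_neg_distrib, sub_eq_add_neg]
    congr 1 <;> refine Finset.sum_congr rfl fun _ _ => by ring
  simp only [funext_iff, hrow, eval_add, eval_pow, eval_X]
  exact forall_congr' fun i => ⟨fun h => by linear_combination h, fun h => by linear_combination h⟩

variable [IsDomain R] [Fintype ι]

theorem rationalInterpolationMatrix_mulVec_eq_iff_eq_toFn {f g : R[X]} (hfg : IsCoprime f g)
    (hg : g.Monic) (hgn : g.natDegree = n) (hf : f.natDegree < m) (ha : Function.Injective a)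
    (hcard : m + n ≤ Fintype.card ι) (hb : ∀ i, f.eval (a i) = b i * g.eval (a i))
    (z : Fin m ⊕ Fin n → R) :
    rationalInterpolationMatrix m n a b *ᵥ z = (fun i => b i * a i ^ n) ↔
      z = Sum.elim (toFn m f) (toFn n g) := by
  have hsplit : z = Sum.elim (toFn m f) (toFn n g) ↔
      z ∘ Sum.inl = toFn m f ∧ z ∘ Sum.inr = toFn n g :=
    ⟨by rintro rfl; exact ⟨rfl, rfl⟩, fun ⟨hl, hr⟩ => by rw [← Sum.elim_comp_inl_inr z, hl, hr]⟩
  rw [rationalInterpolationMatrix_mulVec_eq_iff, hsplit]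
  constructor
  · intro hz
    have hdeg : (ofFn n (z ∘ Sum.inr)).degree < n := ofFn_degree_lt _
    have hqdeg : (X ^ n + ofFn n (z ∘ Sum.inr)).natDegree = g.natDegree := by
      rw [natDegree_add_eq_left_of_degree_lt (by rwa [degree_X_pow]), natDegree_X_pow, hgn]
    obtain ⟨hpf, hqg⟩ := eq_of_eval_mul_eval_eq hfg hg (monic_X_pow_add hdeg) hqdeg
      (ofFn_natDegree_lt (by omega) _) hf ha (hgn ▸ hcard) fun i => by
        rw [hz i, hb i]; ring
    rw [← hg.X_pow_add_ofFn_toFn hgn, add_right_inj] at hqg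
    rw [← ofFn_comp_toFn_eq_id_of_natDegree_lt hf] at hpf
    exact ⟨injective_ofFn m hpf, injective_ofFn n hqg⟩
  · rintro ⟨hl, hr⟩ i
    rw [hl, hr, ofFn_comp_toFn_eq_id_of_natDegree_lt hf, hg.X_pow_add_ofFn_toFn hgn, hb]

end RationalInterpolation

theorem coeff_mem_of_eval_div_eval_mem {L : Type*} [Field L] (F : Subfield L) [Infinite F]
    {f g : L[X]} (hfg : IsCoprime f g) (hg : g.Monic) {S : Set L} (hS : S.Finite)
    (h : ∀ a ∈ F, a ∉ S → g.eval a ≠ 0 ∧ f.eval a / g.eval a ∈ F) :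
    (∀ i, f.coeff i ∈ F) ∧ ∀ i, g.coeff i ∈ F := by
  classical
  set m := f.natDegree + 1
  set n := g.natDegree
  obtain ⟨a, ha, haS⟩ := (hS.preimage Subtype.val_injective.injOn).exists_injective_forall_notMem
    (α := F) (ι := Fin m ⊕ Fin n)
  let b : Fin m ⊕ Fin n → F := fun i =>
    ⟨f.eval (a i : L) / g.eval (a i : L), (h _ (a i).2 (haS i)).2⟩
  have hb : ∀ i, f.eval (F.subtype (a i)) = F.subtype (b i) * g.eval (F.subtype (a i)) :=
    fun i => (div_mul_cancel₀ _ (h _ (a i).2 (haS i)).1).symm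
  have hunique : ∀ y, (rationalInterpolationMatrix m n a b).map F.subtype *ᵥ y =
      F.subtype ∘ (fun i => b i * a i ^ n) ↔ y = Sum.elim (toFn m f) (toFn n g) := fun y => by
    rw [map_rationalInterpolationMatrix, ← rationalInterpolationMatrix_mulVec_eq_iff_eq_toFn hfg hg
      rfl (Nat.lt_add_one _) (Subtype.val_injective.comp ha) (by simp [m, n]) hb]
    rfl
  obtain ⟨z, hz⟩ := Matrix.exists_comp_eq_of_forall_mulVec_eq_iff F.subtype hunique
  have hz_mem : ∀ i, (Sum.elim (toFn m f) (toFn n g) : _ → L) i ∈ F := fun i => by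
    rw [← hz]; exact (z i).2
  refine ⟨coeff_mem_of_forall_lt_natDegree F (Nat.lt_add_one _) fun i hi => ?_,
    coeff_mem_of_forall_lt_natDegree F (Nat.lt_add_one n) fun i hi => ?_⟩
  · simpa [toFn] using hz_mem (Sum.inl ⟨i, hi⟩)
  · rcases Nat.lt_succ_iff_lt_or_eq.mp hi with hi | rfl
    · simpa [toFn] using hz_mem (Sum.inr ⟨i, hi⟩)
    · rw [hg.coeff_natDegree]
      exact F.one_mem

end Polynomial

theorem coeffs_mem_of_rational_function_valued_in_subfield_general
    (Ω : Type) [Field Ω] (F K : Subfield Ω) [IsAlgClosed F]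
    (f g : Polynomial K) (hco : IsCoprime f g) (hg : g.Monic)
    (S : Set Ω) (hSfin : S.Finite)
    (h : ∀ a : Ω, a ∈ F → a ∉ S →
      (g.map K.subtype).eval a ≠ 0 ∧
        (f.map K.subtype).eval a / (g.map K.subtype).eval a ∈ F) :
    (∀ i, ((f.coeff i : K) : Ω) ∈ F) ∧ (∀ i, ((g.coeff i : K) : Ω) ∈ F) := by
  have hco' : IsCoprime (f.map K.subtype) (g.map K.subtype) := by
    simpa only [coe_mapRingHom] using hco.map (mapRingHom K.subtype)
  simpa only [coeff_map, Subfield.coe_subtype] using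
    coeff_mem_of_eval_div_eval_mem F hco' (hg.map K.subtype) hSfin h

/-- Let `Ω` be a field, `F ⊆ Ω` a subfield which is algebraically closed as a field, and
`K ⊆ Ω` a subfield.  Let `f, g ∈ K[X]` be coprime with `g` monic, and suppose there is a finite
subset `S ⊆ F` such that for every `a ∈ F ∖ S` one has `g(a) ≠ 0` and `f(a)/g(a) ∈ F`
(evaluations taken in `Ω`).  Then all coefficients of `f` and of `g` lie in `F ∩ K`. -/
theorem coeffs_mem_of_rational_function_valued_in_subfield
    (Ω : Type) [Field Ω] (F K : Subfield Ω) [IsAlgClosed F]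
    (f g : Polynomial K) (hco : IsCoprime f g) (hg : g.Monic)
    (S : Set Ω) (hSfin : S.Finite) (hSF : S ⊆ (F : Set Ω))
    (h : ∀ a : Ω, a ∈ F → a ∉ S →
      (g.map K.subtype).eval a ≠ 0 ∧
        (f.map K.subtype).eval a / (g.map K.subtype).eval a ∈ F) :
    (∀ i, ((f.coeff i : K) : Ω) ∈ F) ∧ (∀ i, ((g.coeff i : K) : Ω) ∈ F) :=
  coeffs_mem_of_rational_function_valued_in_subfield_general Ω F K f g hco hg S hSfin h
end

section
/- Fix n ≥ 1 and consider n×n complex matrices with rows and columns indexed by 1, …, n. Let f be strictly lower triangular (f_{rs} = 0 whenever r ≤ s) and let g be upper triangular with all diagonal entries equal to 1 (so g is invertible). Then for all indices 1 ≤ i < j ≤ n, the submatrix of g f g^{-1} formed by the rows j, j+1, …, n and the columns 1, …, i has the same rank as the submatrix of f formed by the same rows and columns. -/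
/-!
Because `g` is upper triangular, the rows `≥ j` of `g * X` depend only on the rows `≥ j` of `X`,
and the columns `≤ i` of `X * g⁻¹` only on the columns `≤ i` of `X`. So the south-west block of
`g * f * g⁻¹` is `G₁ * F * G₂`, where `F` is the south-west block of `f` and `G₁`, `G₂` are
diagonal blocks of `g` and `g⁻¹`. Restricting `g * g⁻¹ = 1` in the same way shows that such
diagonal blocks are invertible, so they do not change the rank.
-/

namespace Matrix

variable {ι κ m n R : Type*} [Fintype ι] [LinearOrder ι] [Fintype κ] [LinearOrder κ]
  [CommRing R]

theorem submatrix_ge_mul_of_isUpperTriangular {A : Matrix ι ι R} (hA : A.IsUpperTriangular)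
    (M : Matrix ι n R) (j : ι) (c : m → n) :
    (A * M).submatrix (Subtype.val : {r // j ≤ r} → ι) c =
      A.submatrix (Subtype.val : {r // j ≤ r} → ι) (Subtype.val : {r // j ≤ r} → ι) *
        M.submatrix (Subtype.val : {r // j ≤ r} → ι) c := by
  ext a b
  rw [submatrix_apply, mul_apply, mul_apply, ← Fintype.sum_subtype_add_sum_subtype (j ≤ ·)]
  refine add_eq_left.mpr (Finset.sum_eq_zero fun s _ => ?_)
  rw [hA (lt_of_lt_of_le (not_le.mp s.2) a.2), zero_mul]

theorem submatrix_mul_le_of_isUpperTriangular {B : Matrix κ κ R} (hB : B.IsUpperTriangular)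
    (M : Matrix m κ R) (i : κ) (r : n → m) :
    (M * B).submatrix r (Subtype.val : {c // c ≤ i} → κ) =
      M.submatrix r (Subtype.val : {c // c ≤ i} → κ) *
        B.submatrix (Subtype.val : {c // c ≤ i} → κ) (Subtype.val : {c // c ≤ i} → κ) := by
  ext a b
  rw [submatrix_apply, mul_apply, mul_apply, ← Fintype.sum_subtype_add_sum_subtype (· ≤ i)]
  refine add_eq_left.mpr (Finset.sum_eq_zero fun s _ => ?_)
  rw [hB (lt_of_le_of_lt b.2 (not_le.mp s.2)), mul_zero]

theorem isUnit_det_submatrix_ge_of_isUpperTriangular {A : Matrix ι ι R} (hA : A.IsUpperTriangular)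
    (hdet : IsUnit A.det) (j : ι) :
    IsUnit (A.submatrix (Subtype.val : {r // j ≤ r} → ι) Subtype.val).det := by
  have h := submatrix_ge_mul_of_isUpperTriangular hA A⁻¹ j (Subtype.val : {r // j ≤ r} → ι)
  rw [mul_nonsing_inv A hdet, submatrix_one _ Subtype.val_injective] at h
  exact IsUnit.of_mul_eq_one _ (by rw [← det_mul, ← h, det_one])

theorem isUnit_det_submatrix_le_of_isUpperTriangular {B : Matrix κ κ R} (hB : B.IsUpperTriangular)
    (hdet : IsUnit B.det) (i : κ) :
    IsUnit (B.submatrix (Subtype.val : {c // c ≤ i} → κ) Subtype.val).det := by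
  have h := submatrix_mul_le_of_isUpperTriangular hB B⁻¹ i (Subtype.val : {c // c ≤ i} → κ)
  rw [nonsing_inv_mul B hdet, submatrix_one _ Subtype.val_injective] at h
  exact IsUnit.of_mul_eq_one_right _ (by rw [← det_mul, ← h, det_one])

theorem rank_submatrix_mul_mul_of_isUpperTriangular {A : Matrix ι ι R} {B : Matrix κ κ R}
    (hA : A.IsUpperTriangular) (hAdet : IsUnit A.det)
    (hB : B.IsUpperTriangular) (hBdet : IsUnit B.det) (M : Matrix ι κ R) (i : κ) (j : ι) :
    ((A * M * B).submatrix (Subtype.val : {r // j ≤ r} → ι)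
        (Subtype.val : {c // c ≤ i} → κ)).rank =
      (M.submatrix (Subtype.val : {r // j ≤ r} → ι) (Subtype.val : {c // c ≤ i} → κ)).rank := by
  rw [Matrix.mul_assoc, submatrix_ge_mul_of_isUpperTriangular hA,
    submatrix_mul_le_of_isUpperTriangular hB, ← Matrix.mul_assoc,
    rank_mul_eq_left_of_isUnit_det _ _ (isUnit_det_submatrix_le_of_isUpperTriangular hB hBdet i),
    rank_mul_eq_right_of_isUnit_det _ _ (isUnit_det_submatrix_ge_of_isUpperTriangular hA hAdet j)]

end Matrix

theorem rank_southwest_submatrix_conj_invariant_general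
    (n : ℕ) (f g : Matrix (Fin n) (Fin n) ℂ)
    (hg : ∀ r s : Fin n, s < r → g r s = 0)
    (hgdiag : ∀ r : Fin n, g r r = 1)
    (i j : Fin n) :
    ((g * f * g⁻¹).submatrix
        (fun r : {r : Fin n // j ≤ r} => (r : Fin n))
        (fun c : {c : Fin n // c ≤ i} => (c : Fin n))).rank
      = (f.submatrix
        (fun r : {r : Fin n // j ≤ r} => (r : Fin n))
        (fun c : {c : Fin n // c ≤ i} => (c : Fin n))).rank := by
  have hg_upper : g.IsUpperTriangular := fun r s h => hg r s h
  have hdet : IsUnit g.det := by simp [Matrix.det_of_isUpperTriangular hg_upper, hgdiag]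
  have := g.invertibleOfIsUnitDet hdet
  exact Matrix.rank_submatrix_mul_mul_of_isUpperTriangular hg_upper hdet
    (Matrix.blockTriangular_inv_of_blockTriangular hg_upper) (g.isUnit_nonsing_inv_det hdet) f i j

/-- **Invariance of Kirillov's rank invariants under the coadjoint action.**
Let `f` be a strictly lower triangular `n × n` complex matrix and `g` an upper triangular
matrix with all diagonal entries equal to `1` (hence invertible).  For all indices `i < j`,
the submatrix of `g * f * g⁻¹` formed by the rows `j, j+1, …, n` and the columns `1, …, i`
has the same rank as the corresponding submatrix of `f`. -/
theorem rank_southwest_submatrix_conj_invariant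
    (n : ℕ) (f g : Matrix (Fin n) (Fin n) ℂ)
    (hf : ∀ r s : Fin n, r ≤ s → f r s = 0)
    (hg : ∀ r s : Fin n, s < r → g r s = 0)
    (hgdiag : ∀ r : Fin n, g r r = 1)
    (i j : Fin n) (hij : i < j) :
    ((g * f * g⁻¹).submatrix
        (fun r : {r : Fin n // j ≤ r} => (r : Fin n))
        (fun c : {c : Fin n // c ≤ i} => (c : Fin n))).rank
      = (f.submatrix
        (fun r : {r : Fin n // j ≤ r} => (r : Fin n))
        (fun c : {c : Fin n // c ≤ i} => (c : Fin n))).rank :=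
  rank_southwest_submatrix_conj_invariant_general n f g hg hgdiag i j
end
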